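/- Let T, U be closed subspaces of H with cos(φ_{T,U}) > 0, (u_j) a frame for U with frame operator S, and (t_k) a frame for T with synthesis operator T. Then T^⊥ ∩ S(T) = {0}, and hence H = T ⊕ S(T)^⊥. -/

import Mathlib

/-!
For `x ∈ T`, the frame inequality applied to `P_U x` and the angle bound
`‖P_U x‖ ≥ cos(φ_{T,U}) ‖x‖` give the coercivity estimate
`A cos²(φ_{T,U}) ‖x‖² ≤ Σ_j |⟨u_j, x⟩|² = Re ⟨x, S x⟩`.
Coercivity on `T` forces `T^⊥ ∩ S(T) = {0}`. It also makes the compression `P_T S|_T` surjective,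
Lax–Milgram style: it is bounded below, so its range is closed, and its range has trivial
orthogonal complement. As `S` is self-adjoint, `f - w ⊥ S(T)` means `P_T S w = P_T S f`, which
yields the decomposition `f = w + (f - w)`; it is unique by coercivity once more.
-/

noncomputable section
open scoped InnerProductSpace ENNReal

/-- The sequence space ℓ²(ℕ). -/
abbrev Lp2 : Type := lp (fun _ : ℕ => ℂ) 2

/-- `u` is a frame for the subspace `U` with frame bounds `A` and `B`:
`A‖f‖² ≤ Σ_j |⟨f,u_j⟩|² ≤ B‖f‖²` for all `f ∈ U`, and all `u_j ∈ U`. -/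
def IsFrameFor {H : Type} [NormedAddCommGroup H] [InnerProductSpace ℂ H]
    (u : ℕ → H) (U : Submodule ℂ H) (A B : ℝ) : Prop :=
  (∀ j, u j ∈ U) ∧
    ∀ f ∈ U, A * ‖f‖ ^ 2 ≤ ∑' j, ‖⟪u j, f⟫_ℂ‖ ^ 2 ∧
      ∑' j, ‖⟪u j, f⟫_ℂ‖ ^ 2 ≤ B * ‖f‖ ^ 2

/-- `cos(φ_{T,U}) = inf_{g ∈ T, ‖g‖=1} ‖P_U g‖` (orthogonal-projection form). -/
def cosAngleP {H : Type} [NormedAddCommGroup H] [InnerProductSpace ℂ H]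
    [CompleteSpace H] (T U : Submodule ℂ H) [CompleteSpace U] : ℝ :=
  sInf {r : ℝ | ∃ g ∈ T, ‖g‖ = 1 ∧ r = ‖(U.orthogonalProjection g : H)‖}

/-- `cos(φ_{T,Y}) = inf_{g ∈ T, ‖g‖=1} sup_{v ∈ Y, ‖v‖=1} |⟨g,v⟩|` (inner-product form,
for a general subset `Y`). -/
def cosAngleS {H : Type} [NormedAddCommGroup H] [InnerProductSpace ℂ H]
    (T : Submodule ℂ H) (Y : Set H) : ℝ :=
  sInf {r : ℝ | ∃ g ∈ T, ‖g‖ = 1 ∧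
    r = sSup {s : ℝ | ∃ v ∈ Y, ‖v‖ = 1 ∧ s = ‖⟪g, v⟫_ℂ‖}}

open RCLike

section Coercive

variable {𝕜 E : Type*} [RCLike 𝕜] [NormedAddCommGroup E] [InnerProductSpace 𝕜 E]

theorem eq_zero_of_mul_norm_sq_le_re_inner {α : ℝ} (hα : 0 < α) {x y : E}
    (hxy : α * ‖x‖ ^ 2 ≤ re ⟪x, y⟫_𝕜) (h : ⟪x, y⟫_𝕜 = 0) : x = 0 := by
  rw [h, map_zero] at hxy
  simpa using nonpos_of_mul_nonpos_right hxy hα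

theorem ContinuousLinearMap.antilipschitz_of_coercive (R : E →L[𝕜] E) {α : ℝ} (hα : 0 < α)
    (hR : ∀ z, α * ‖z‖ ^ 2 ≤ re ⟪z, R z⟫_𝕜) : AntilipschitzWith (Real.toNNReal α⁻¹) R := by
  refine R.antilipschitz_of_bound fun z => ?_
  rw [Real.coe_toNNReal _ (inv_nonneg.2 hα.le), inv_mul_eq_div, le_div_iff₀' hα]
  have h : α * ‖z‖ ^ 2 ≤ ‖z‖ * ‖R z‖ :=
    (hR z).trans ((re_le_norm _).trans (norm_inner_le_norm _ _))
  rcases (norm_nonneg z).eq_or_lt with hz | hz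
  · simp [← hz]
  nlinarith

theorem ContinuousLinearMap.surjective_of_coercive [CompleteSpace E] (R : E →L[𝕜] E) {α : ℝ}
    (hα : 0 < α) (hR : ∀ z, α * ‖z‖ ^ 2 ≤ re ⟪z, R z⟫_𝕜) : Function.Surjective R := by
  set K : Submodule 𝕜 E := LinearMap.range (R : E →ₗ[𝕜] E)
  have hclosed : IsClosed (K : Set E) := by
    rw [LinearMap.coe_range]
    exact (R.antilipschitz_of_coercive hα hR).isClosed_range R.uniformContinuous
  have : CompleteSpace K := hclosed.completeSpace_coe
  have horth : Kᗮ = ⊥ := by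
    refine (Submodule.eq_bot_iff _).2 fun z hz => eq_zero_of_mul_norm_sq_le_re_inner hα (hR z)
      (Submodule.inner_left_of_mem_orthogonal (LinearMap.mem_range_self _ z) hz)
  exact LinearMap.range_eq_top.1 (Submodule.orthogonal_eq_bot_iff.1 horth)

end Coercive

section Decomposition

variable {𝕜 E : Type*} [RCLike 𝕜] [NormedAddCommGroup E] [InnerProductSpace 𝕜 E]
  {K : Submodule 𝕜 E} {S : E →L[𝕜] E} {α : ℝ}

theorem eq_zero_of_mem_orthogonal_of_mem_image_of_coercive (hα : 0 < α)
    (hcoer : ∀ x ∈ K, α * ‖x‖ ^ 2 ≤ re ⟪x, S x⟫_𝕜) {g : E} (hg : g ∈ Kᗮ) (hgS : g ∈ S '' K) :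
    g = 0 := by
  obtain ⟨x, hx, rfl⟩ := hgS
  rw [eq_zero_of_mul_norm_sq_le_re_inner hα (hcoer x hx)
    (Submodule.inner_right_of_mem_orthogonal hx hg), map_zero]

theorem exists_mem_apply_sub_mem_orthogonal_of_coercive [CompleteSpace K] (hα : 0 < α)
    (hcoer : ∀ x ∈ K, α * ‖x‖ ^ 2 ≤ re ⟪x, S x⟫_𝕜) (f : E) : ∃ w ∈ K, S (f - w) ∈ Kᗮ := by
  set R : K →L[𝕜] K := K.orthogonalProjectionOnto ∘L S ∘L K.subtypeL
  have hR : ∀ z : K, α * ‖z‖ ^ 2 ≤ re ⟪z, R z⟫_𝕜 := fun z => by simpa [R] using hcoer z z.2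
  obtain ⟨w, hw⟩ := R.surjective_of_coercive hα hR (K.orthogonalProjectionOnto (S f))
  refine ⟨w, w.2, ?_⟩
  rw [← K.starProjection_apply_eq_zero_iff, K.starProjection_apply, map_sub, map_sub, ← hw]
  simp [R]

theorem forall_inner_image_eq_zero_iff_of_isSymmetric (hS : (S : E →ₗ[𝕜] E).IsSymmetric)
    (p : E) : (∀ v ∈ S '' K, ⟪v, p⟫_𝕜 = 0) ↔ S p ∈ Kᗮ := by
  simp only [Set.forall_mem_image, Submodule.mem_orthogonal]
  exact forall₂_congr fun x _ => by rw [show ⟪S x, p⟫_𝕜 = ⟪x, S p⟫_𝕜 from hS x p]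

theorem existsUnique_add_of_coercive [CompleteSpace K] (hS : (S : E →ₗ[𝕜] E).IsSymmetric)
    (hα : 0 < α) (hcoer : ∀ x ∈ K, α * ‖x‖ ^ 2 ≤ re ⟪x, S x⟫_𝕜) (f : E) :
    ∃! p : E × E, p.1 ∈ K ∧ (∀ v ∈ S '' K, ⟪v, p.2⟫_𝕜 = 0) ∧ f = p.1 + p.2 := by
  simp only [forall_inner_image_eq_zero_iff_of_isSymmetric hS]
  obtain ⟨w, hwK, hw⟩ := exists_mem_apply_sub_mem_orthogonal_of_coercive hα hcoer f
  refine ⟨(w, f - w), ⟨hwK, hw, by simp⟩, ?_⟩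
  rintro ⟨q₁, q₂⟩ ⟨hq₁, hq₂, rfl⟩
  have hd : q₁ - w ∈ K := K.sub_mem hq₁ hwK
  have hSd : S (q₁ - w) ∈ Kᗮ := by
    convert Kᗮ.sub_mem hw hq₂ using 1
    simp only [map_sub, map_add]
    abel
  obtain rfl : q₁ = w := sub_eq_zero.1 <| eq_zero_of_mul_norm_sq_le_re_inner hα (hcoer _ hd)
    (Submodule.inner_right_of_mem_orthogonal hd hSd)
  simp

end Decomposition

section FrameOperator

variable {𝕜 E ι : Type*} [RCLike 𝕜] [NormedAddCommGroup E] [InnerProductSpace 𝕜 E]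

def IsFrameOperator (u : ι → E) (S : E →L[𝕜] E) : Prop :=
  ∀ f, HasSum (fun j => ⟪u j, f⟫_𝕜 • u j) (S f)

variable {u : ι → E} {S : E →L[𝕜] E}

theorem IsFrameOperator.hasSum_norm_inner_sq (hS : IsFrameOperator u S) (x : E) :
    HasSum (fun j => ‖⟪u j, x⟫_𝕜‖ ^ 2) (re ⟪x, S x⟫_𝕜) := by
  have h := hasSum_re 𝕜 ((innerSL 𝕜 x).hasSum (hS x))
  simp only [innerSL_apply_apply] at h
  convert h using 2 with j
  rw [inner_smul_right, ← inner_conj_symm x (u j), RCLike.mul_conj,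
    ← RCLike.ofReal_pow, RCLike.ofReal_re]

theorem IsFrameOperator.isSymmetric (hS : IsFrameOperator u S) : (S : E →ₗ[𝕜] E).IsSymmetric := by
  intro x y
  have hx := (innerSLFlip 𝕜 y).hasSum (hS x)
  have hy := (innerSL 𝕜 x).hasSum (hS y)
  refine hx.unique (hy.congr_fun fun j => ?_)
  simp [inner_conj_symm, mul_comm]

end FrameOperator

section Angle

variable {H : Type} [NormedAddCommGroup H] [InnerProductSpace ℂ H]

theorem IsFrameFor.mul_norm_starProjection_sq_le {U : Submodule ℂ H} [U.HasOrthogonalProjection]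
    {u : ℕ → H} {A B : ℝ} (hu : IsFrameFor u U A B) (x : H) :
    A * ‖U.starProjection x‖ ^ 2 ≤ ∑' j, ‖⟪u j, x⟫_ℂ‖ ^ 2 := by
  have hproj : ∀ j, ⟪u j, U.starProjection x⟫_ℂ = ⟪u j, x⟫_ℂ := fun j => by
    rw [← U.inner_starProjection_left_eq_right, U.starProjection_eq_self_iff.2 (hu.1 j)]
  simpa only [hproj] using (hu.2 _ (U.starProjection_apply_mem x)).1

variable [CompleteSpace H] {T U : Submodule ℂ H} [CompleteSpace U]

theorem cosAngleP_nonneg : 0 ≤ cosAngleP T U :=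
  Real.sInf_nonneg <| by rintro _ ⟨g, -, -, rfl⟩; exact norm_nonneg _

theorem cosAngleP_mul_norm_le {x : H} (hx : x ∈ T) :
    cosAngleP T U * ‖x‖ ≤ ‖U.starProjection x‖ := by
  rcases eq_or_ne x 0 with rfl | hx0
  · simp
  have hxn : 0 < ‖x‖ := norm_pos_iff.2 hx0
  have hle : cosAngleP T U ≤ ‖U.starProjection ((‖x‖ : ℂ)⁻¹ • x)‖ :=
    csInf_le ⟨0, by rintro _ ⟨g, -, -, rfl⟩; exact norm_nonneg _⟩
      ⟨_, T.smul_mem _ hx, by simp [norm_smul, hxn.ne'], rfl⟩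
  rw [map_smul, norm_smul, norm_inv, Complex.norm_real, norm_norm, le_inv_mul_iff₀ hxn] at hle
  rwa [mul_comm]

theorem IsFrameOperator.mul_cosAngleP_sq_mul_norm_sq_le {u : ℕ → H} {A B : ℝ} {S : H →L[ℂ] H}
    (hS : IsFrameOperator u S) (hu : IsFrameFor u U A B) (hA : 0 ≤ A) {x : H} (hx : x ∈ T) :
    A * cosAngleP T U ^ 2 * ‖x‖ ^ 2 ≤ re ⟪x, S x⟫_ℂ :=
  calc A * cosAngleP T U ^ 2 * ‖x‖ ^ 2 = A * (cosAngleP T U * ‖x‖) ^ 2 := by ring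
    _ ≤ A * ‖U.starProjection x‖ ^ 2 := by
      gcongr
      · exact mul_nonneg cosAngleP_nonneg (norm_nonneg x)
      · exact cosAngleP_mul_norm_le hx
    _ ≤ ∑' j, ‖⟪u j, x⟫_ℂ‖ ^ 2 := hu.mul_norm_starProjection_sq_le x
    _ = re ⟪x, S x⟫_ℂ := (hS.hasSum_norm_inner_sq x).tsum_eq

end Angle

theorem direct_sum_T_STperp_general
    {H : Type} [NormedAddCommGroup H] [InnerProductSpace ℂ H] [CompleteSpace H]
    (T U : Submodule ℂ H) [CompleteSpace T] [CompleteSpace U]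
    (hangle : 0 < cosAngleP T U)
    (u : ℕ → H) (A B : ℝ) (hA : 0 < A) (hframe : IsFrameFor u U A B)
    (S : H →L[ℂ] H) (hS : ∀ f, HasSum (fun j => ⟪u j, f⟫_ℂ • u j) (S f)) :
    (∀ g ∈ Tᗮ, g ∈ S '' (T : Set H) → g = 0) ∧
      (∀ f : H, ∃! p : H × H,
        p.1 ∈ T ∧ (∀ v ∈ S '' (T : Set H), ⟪v, p.2⟫_ℂ = 0) ∧ f = p.1 + p.2) := by
  have hα : 0 < A * cosAngleP T U ^ 2 := mul_pos hA (pow_pos hangle 2)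
  have hcoercive : ∀ x ∈ T, A * cosAngleP T U ^ 2 * ‖x‖ ^ 2 ≤ re ⟪x, S x⟫_ℂ :=
    fun x hx => IsFrameOperator.mul_cosAngleP_sq_mul_norm_sq_le hS hframe hA.le hx
  exact ⟨fun g hg hgS => eq_zero_of_mem_orthogonal_of_mem_image_of_coercive hα hcoercive hg hgS,
    existsUnique_add_of_coercive (IsFrameOperator.isSymmetric hS) hα hcoercive⟩

/-- If `cos(φ_{T,U}) > 0`, then `T^⊥ ∩ S(T) = {0}` and hence
`H = T ⊕ S(T)^⊥` (a not-necessarily-orthogonal direct sum). -/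
theorem direct_sum_T_STperp
    {H : Type} [NormedAddCommGroup H] [InnerProductSpace ℂ H] [CompleteSpace H]
    (T U : Submodule ℂ H) [CompleteSpace T] [CompleteSpace U]
    (hangle : 0 < cosAngleP T U)
    (u : ℕ → H) (A B : ℝ) (hA : 0 < A) (hAB : A ≤ B) (hframe : IsFrameFor u U A B)
    (S : H →L[ℂ] H) (hS : ∀ f, HasSum (fun j => ⟪u j, f⟫_ℂ • u j) (S f))
    (t : ℕ → H) (C D : ℝ) (hC : 0 < C) (hCD : C ≤ D) (htframe : IsFrameFor t T C D)
    (Tsyn : Lp2 →L[ℂ] H) (hTsyn : ∀ k, Tsyn (lp.single 2 k 1) = t k) :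
    (∀ g ∈ Tᗮ, g ∈ S '' (T : Set H) → g = 0) ∧
      (∀ f : H, ∃! p : H × H,
        p.1 ∈ T ∧ (∀ v ∈ S '' (T : Set H), ⟪v, p.2⟫_ℂ = 0) ∧ f = p.1 + p.2) :=
  direct_sum_T_STperp_general T U hangle u A B hA hframe S hS
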